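/- arXiv:2305.01716 — 10 statements merged into one kernel-verified Lean document; each statement's English description precedes it below -/
import Mathlib

section
/- Let C be a real m×r matrix with rank r, let R be a real r×n matrix with rank r, let B be a Moore–Penrose pseudoinverse of C and D a Moore–Penrose pseudoinverse of R. Then D B is a Moore–Penrose pseudoinverse of C R. -/
open Matrix

lemma cancel_of_full_rank {m r : ℕ} (C : Matrix (Fin m) (Fin r) ℝ) (hC : C.rank = r)
    (X : Matrix (Fin r) (Fin r) ℝ) (h : C * X = C) : X = 1 := by
  have hinj : Function.Injective C.mulVecLin := by
    rw [← LinearMap.ker_eq_bot]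
    have h1 := C.mulVecLin.finrank_range_add_finrank_ker
    rw [show Module.finrank ℝ (LinearMap.range C.mulVecLin) = r from hC] at h1
    have h2 : Module.finrank ℝ (Fin r → ℝ) = r := by simp
    rw [h2] at h1
    have h0 : Module.finrank ℝ (LinearMap.ker C.mulVecLin) = 0 := by omega
    exact Submodule.finrank_eq_zero.mp h0
  have hv : ∀ v : Fin r → ℝ, X *ᵥ v = v := by
    intro v
    apply hinj
    show C *ᵥ (X *ᵥ v) = C *ᵥ v
    rw [Matrix.mulVec_mulVec, h]
  ext i j
  have := congrFun (hv (Pi.single j 1)) i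
  simpa [Matrix.mulVec_single, Matrix.one_apply, Pi.single_apply, eq_comm] using this

/-- `B` is a Moore–Penrose pseudoinverse of `A`: the four Penrose equations hold. -/
def IsMoorePenrose {m n : ℕ} (A : Matrix (Fin m) (Fin n) ℝ)
    (B : Matrix (Fin n) (Fin m) ℝ) : Prop :=
  A * B * A = A ∧ B * A * B = B ∧ (B * A)ᵀ = B * A ∧ (A * B)ᵀ = A * B

/-- If `C` (m×r) has full column rank `r` and `R` (r×n) has full row rank `r`,
then the reverse order law holds: `R⁺ C⁺` is the pseudoinverse of `C R`. -/
theorem reverse_order_law_of_full_rank (m r n : ℕ)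
    (C : Matrix (Fin m) (Fin r) ℝ) (R : Matrix (Fin r) (Fin n) ℝ)
    (hC : C.rank = r) (hR : R.rank = r)
    (B : Matrix (Fin r) (Fin m) ℝ) (D : Matrix (Fin n) (Fin r) ℝ)
    (hB : IsMoorePenrose C B) (hD : IsMoorePenrose R D) :
    IsMoorePenrose (C * R) (D * B) := by
  obtain ⟨hB1, hB2, hB3, hB4⟩ := hB
  obtain ⟨hD1, hD2, hD3, hD4⟩ := hD
  have hBC : B * C = 1 := by
    apply cancel_of_full_rank C hC
    rw [← Matrix.mul_assoc, hB1]
  have hRD : R * D = 1 := by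
    have hRt : Rᵀ.rank = r := by rw [rank_transpose]; exact hR
    have h' : Rᵀ * (Dᵀ * Rᵀ) = Rᵀ := by
      rw [← Matrix.transpose_mul, ← Matrix.transpose_mul, hD1]
    have h1 := cancel_of_full_rank Rᵀ hRt (Dᵀ * Rᵀ) h'
    have h2 : (R * D)ᵀ = 1 := by rw [Matrix.transpose_mul]; exact h1
    calc R * D = (R * D)ᵀᵀ := by rw [transpose_transpose]
      _ = 1 := by rw [h2, transpose_one]
  have key3 : D * B * (C * R) = D * R := by
    calc D * B * (C * R) = D * (B * C) * R := by
          rw [Matrix.mul_assoc, ← Matrix.mul_assoc B C R, ← Matrix.mul_assoc]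
      _ = D * R := by rw [hBC, Matrix.mul_one]
  have key4 : C * R * (D * B) = C * B := by
    calc C * R * (D * B) = C * (R * D) * B := by
          rw [Matrix.mul_assoc, ← Matrix.mul_assoc R D B, ← Matrix.mul_assoc]
      _ = C * B := by rw [hRD, Matrix.mul_one]
  refine ⟨?_, ?_, ?_, ?_⟩
  · rw [key4]
    calc C * B * (C * R) = C * B * C * R := by rw [← Matrix.mul_assoc (C * B) C R]
      _ = C * R := by rw [hB1]
  · rw [key3]
    calc D * R * (D * B) = D * (R * D) * B := by
          rw [Matrix.mul_assoc, ← Matrix.mul_assoc R D B, ← Matrix.mul_assoc]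
      _ = D * B := by rw [hRD, Matrix.mul_one]
  · rw [key3]; exact hD3
  · rw [key4]; exact hB4
end

section
/- Let C be a real m×k matrix and R a real k×n matrix. Let B be a Moore–Penrose pseudoinverse of C and D a Moore–Penrose pseudoinverse of R. If M is a Moore–Penrose pseudoinverse of B C R and N is a Moore–Penrose pseudoinverse of C R D, then M N is a Moore–Penrose pseudoinverse of C R. In the paper's notation: (C R)⁺ = (C⁺ C R)⁺ (C R R⁺)⁺, with no rank assumptions on C or R. -/
open Matrix

private lemma aux1 {k n : ℕ} (P : Matrix (Fin k) (Fin k) ℝ) (E R : Matrix (Fin k) (Fin n) ℝ)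
    (M : Matrix (Fin n) (Fin k) ℝ) (hP : Pᵀ = P) (hPE : P * E = E) (hPR : P * R = E)
    (hEME : E * M * E = E) (hEM : (E * M)ᵀ = E * M) : E * M * R = E := by
  have h : Rᵀ * (E * M) = Eᵀ := by
    calc Rᵀ * (E * M) = Rᵀ * (P * E * M) := by rw [hPE]
      _ = Rᵀ * Pᵀ * (E * M) := by rw [hP]; simp only [Matrix.mul_assoc]
      _ = (P * R)ᵀ * (E * M) := by rw [Matrix.transpose_mul P R]
      _ = Eᵀ * (E * M) := by rw [hPR]
      _ = Eᵀ * (E * M)ᵀ := by rw [hEM]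
      _ = (E * M * E)ᵀ := by rw [Matrix.transpose_mul (E * M) E]
      _ = Eᵀ := by rw [hEME]
  calc E * M * R = ((E * M * R)ᵀ)ᵀ := (Matrix.transpose_transpose _).symm
    _ = (Rᵀ * (E * M)ᵀ)ᵀ := by rw [Matrix.transpose_mul (E * M) R]
    _ = (Rᵀ * (E * M))ᵀ := by rw [hEM]
    _ = Eᵀᵀ := by rw [h]
    _ = E := Matrix.transpose_transpose _

private lemma aux2 {m k : ℕ} (Q : Matrix (Fin k) (Fin k) ℝ) (F : Matrix (Fin m) (Fin k) ℝ)
    (N : Matrix (Fin k) (Fin m) ℝ) (hQ : Qᵀ = Q) (hFQ : F * Q = F)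
    (hNFN : N * F * N = N) (hNF : (N * F)ᵀ = N * F) : Q * N = N := by
  calc Q * N = Q * (N * F * N) := by rw [hNFN]
    _ = Q * ((N * F)ᵀ * N) := by rw [hNF]
    _ = Q * (Fᵀ * (Nᵀ * N)) := by rw [Matrix.transpose_mul N F]; simp only [Matrix.mul_assoc]
    _ = Qᵀ * (Fᵀ * (Nᵀ * N)) := by rw [hQ]
    _ = (F * Q)ᵀ * (Nᵀ * N) := by rw [Matrix.transpose_mul F Q]; simp only [Matrix.mul_assoc]
    _ = Fᵀ * (Nᵀ * N) := by rw [hFQ]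
    _ = (N * F)ᵀ * N := by rw [Matrix.transpose_mul N F]; simp only [Matrix.mul_assoc]
    _ = N * F * N := by rw [hNF]
    _ = N := hNFN

/-- `(C R)⁺ = (C⁺ C R)⁺ (C R R⁺)⁺`, with no rank assumptions on `C` or `R`. -/
theorem pinv_eq_pinv_mul_pinv (m k n : ℕ)
    (C : Matrix (Fin m) (Fin k) ℝ) (R : Matrix (Fin k) (Fin n) ℝ)
    (B : Matrix (Fin k) (Fin m) ℝ) (D : Matrix (Fin n) (Fin k) ℝ)
    (hB : IsMoorePenrose C B) (hD : IsMoorePenrose R D)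
    (M : Matrix (Fin n) (Fin k) ℝ) (N : Matrix (Fin k) (Fin m) ℝ)
    (hM : IsMoorePenrose (B * C * R) M) (hN : IsMoorePenrose (C * R * D) N) :
    IsMoorePenrose (C * R) (M * N) := by
  obtain ⟨hB1, hB2, hB3, hB4⟩ := hB
  obtain ⟨hD1, hD2, hD3, hD4⟩ := hD
  obtain ⟨hM1, hM2, hM3, hM4⟩ := hM
  obtain ⟨hN1, hN2, hN3, hN4⟩ := hN
  have hPE : B * C * (B * C * R) = B * C * R := by
    calc B * C * (B * C * R) = B * C * B * (C * R) := by simp only [Matrix.mul_assoc]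
      _ = B * (C * R) := by rw [hB2]
      _ = B * C * R := by simp only [Matrix.mul_assoc]
  have L1 : B * C * R * M * R = B * C * R := aux1 (B * C) (B * C * R) R M hB3 hPE rfl hM1 hM4
  have hFQ : C * R * D * (R * D) = C * R * D := by
    calc C * R * D * (R * D) = C * R * (D * R * D) := by simp only [Matrix.mul_assoc]
      _ = C * R * D := by rw [hD2]
  have S1 : R * D * N = N := aux2 (R * D) (C * R * D) N hD4 hFQ hN2 hN3
  have hFR : C * R * D * R = C * R := by
    calc C * R * D * R = C * (R * D * R) := by simp only [Matrix.mul_assoc]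
      _ = C * R := by rw [hD1]
  have hCE : C * (B * C * R) = C * R := by
    calc C * (B * C * R) = C * B * C * R := by simp only [Matrix.mul_assoc]
      _ = C * R := by rw [hB1]
  have X' : M * N = M * (B * C * R) * (D * N) := by
    calc M * N = M * (B * C * R) * M * N := by rw [hM2]
      _ = M * (B * C * R) * M * (R * D * N) := by rw [S1]
      _ = M * (B * C * R * M * R) * (D * N) := by simp only [Matrix.mul_assoc]
      _ = M * (B * C * R) * (D * N) := by rw [L1]
  have hXA : M * N * (C * R) = M * (B * C * R) := by
    calc M * N * (C * R) = M * (B * C * R) * (D * N) * (C * R) := by rw [X']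
      _ = M * (B * C * R) * (D * N) * (C * R * D * R) := by rw [hFR]
      _ = M * B * (C * R * D * N * (C * R * D)) * R := by simp only [Matrix.mul_assoc]
      _ = M * B * (C * R * D) * R := by rw [hN1]
      _ = M * (B * C) * (R * D * R) := by simp only [Matrix.mul_assoc]
      _ = M * (B * C) * R := by rw [hD1]
      _ = M * (B * C * R) := by simp only [Matrix.mul_assoc]
  have hAX : C * R * (M * N) = C * R * D * N := by
    calc C * R * (M * N) = C * R * (M * (B * C * R) * (D * N)) := by rw [X']
      _ = C * (B * C * R) * (M * (B * C * R) * (D * N)) := by rw [hCE]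
      _ = C * (B * C * R * M * (B * C * R)) * (D * N) := by simp only [Matrix.mul_assoc]
      _ = C * (B * C * R) * (D * N) := by rw [hM1]
      _ = C * B * C * (R * (D * N)) := by simp only [Matrix.mul_assoc]
      _ = C * (R * (D * N)) := by rw [hB1]
      _ = C * R * D * N := by simp only [Matrix.mul_assoc]
  refine ⟨?_, ?_, ?_, ?_⟩
  · calc C * R * (M * N) * (C * R) = C * R * D * N * (C * R) := by rw [hAX]
      _ = C * R * D * N * (C * R * D * R) := by rw [hFR]
      _ = C * R * D * N * (C * R * D) * R := by simp only [Matrix.mul_assoc]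
      _ = C * R * D * R := by rw [hN1]
      _ = C * R := hFR
  · calc M * N * (C * R) * (M * N) = M * (B * C * R) * (M * N) := by rw [hXA]
      _ = M * (B * C * R) * M * N := by simp only [Matrix.mul_assoc]
      _ = M * N := by rw [hM2]
  · rw [hXA]; exact hM3
  · rw [hAX]; exact hN4
end

section
/- Let A be a real m×n matrix, P a real m×p matrix, and Q a real n×q matrix with rank(Pᵀ A) = rank(A Q) = rank(A). If B is a Moore–Penrose pseudoinverse of Pᵀ A and D is a Moore–Penrose pseudoinverse of A Q, then the matrix (B Pᵀ A)(Q D) = B Pᵀ A Q D is a Moore–Penrose pseudoinverse of A. In the paper's notation: A⁺ = ((PᵀA)⁺ Pᵀ A)(Q (A Q)⁺). -/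
open Matrix

/-- Rank equality gives a right factorization `A = (A Q) E`. -/
lemma factor_right {m n q : ℕ} (A : Matrix (Fin m) (Fin n) ℝ) (Q : Matrix (Fin n) (Fin q) ℝ)
    (h : (A * Q).rank = A.rank) : ∃ E : Matrix (Fin q) (Fin n) ℝ, A * Q * E = A := by
  have hle : LinearMap.range (A * Q).mulVecLin ≤ LinearMap.range A.mulVecLin := by
    rw [Matrix.mulVecLin_mul]
    exact LinearMap.range_comp_le_range _ _
  have heq : LinearMap.range (A * Q).mulVecLin = LinearMap.range A.mulVecLin :=
    Submodule.eq_of_le_of_finrank_eq hle h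
  have hx : ∀ j : Fin n, ∃ x : Fin q → ℝ, (A * Q).mulVecLin x = A.mulVecLin (Pi.single j 1) := by
    intro j
    have : A.mulVecLin (Pi.single j 1) ∈ LinearMap.range (A * Q).mulVecLin := by
      rw [heq]; exact LinearMap.mem_range_self _ _
    exact this
  choose x hxx using hx
  refine ⟨Matrix.of fun i j => x j i, ?_⟩
  ext i j
  have := congrFun (hxx j) i
  simp only [Matrix.mulVecLin_apply, Matrix.mulVec_single, mul_one, MulOpposite.op_one, one_smul, Matrix.col_apply] at this
  rw [Matrix.mul_apply]
  simp only [Matrix.mul_apply] at this ⊢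
  rw [← this]
  simp [Matrix.mulVec, dotProduct, Matrix.mul_apply]

/-- Rank equality gives a left factorization `A = F (Pᵀ A)`. -/
lemma factor_left {m n p : ℕ} (A : Matrix (Fin m) (Fin n) ℝ) (P : Matrix (Fin m) (Fin p) ℝ)
    (h : (Pᵀ * A).rank = A.rank) : ∃ F : Matrix (Fin m) (Fin p) ℝ, F * (Pᵀ * A) = A := by
  have h' : (Aᵀ * P).rank = Aᵀ.rank := by
    rw [Matrix.rank_transpose]
    calc (Aᵀ * P).rank = (Aᵀ * P)ᵀ.rank := (Matrix.rank_transpose _).symm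
      _ = (Pᵀ * A).rank := by rw [Matrix.transpose_mul, Matrix.transpose_transpose]
      _ = A.rank := h
  obtain ⟨E, hE⟩ := factor_right Aᵀ P h'
  refine ⟨Eᵀ, ?_⟩
  have := congrArg Matrix.transpose hE
  simpa [Matrix.transpose_mul, Matrix.mul_assoc] using this

/-- If `rank (Pᵀ A) = rank (A Q) = rank A`, then
`A⁺ = ((Pᵀ A)⁺ Pᵀ A)(Q (A Q)⁺)`. -/
theorem randomized_pinv (m n p q : ℕ)
    (A : Matrix (Fin m) (Fin n) ℝ) (P : Matrix (Fin m) (Fin p) ℝ)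
    (Q : Matrix (Fin n) (Fin q) ℝ)
    (hP : (Pᵀ * A).rank = A.rank) (hQ : (A * Q).rank = A.rank)
    (B : Matrix (Fin n) (Fin p) ℝ) (D : Matrix (Fin q) (Fin m) ℝ)
    (hB : IsMoorePenrose (Pᵀ * A) B) (hD : IsMoorePenrose (A * Q) D) :
    IsMoorePenrose A (B * (Pᵀ * A) * (Q * D)) := by
  obtain ⟨F, hF⟩ := factor_left A P hP
  obtain ⟨E, hE⟩ := factor_right A Q hQ
  obtain ⟨hB1, hB2, hB3, hB4⟩ := hB
  obtain ⟨hD1, hD2, hD3, hD4⟩ := hD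
  -- A * (B * (Pᵀ A)) = A
  have key1 : A * (B * (Pᵀ * A)) = A := by
    calc A * (B * (Pᵀ * A)) = F * (Pᵀ * A) * (B * (Pᵀ * A)) := by rw [hF]
      _ = F * ((Pᵀ * A) * B * (Pᵀ * A)) := by simp only [Matrix.mul_assoc]
      _ = F * (Pᵀ * A) := by rw [hB1]
      _ = A := hF
  -- (A * Q * D) * A = A
  have key2 : A * Q * D * A = A := by
    calc A * Q * D * A = A * Q * D * (A * Q * E) := by rw [hE]
      _ = (A * Q * D * (A * Q)) * E := by simp only [Matrix.mul_assoc]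
      _ = (A * Q) * E := by rw [hD1]
      _ = A := hE
  -- A * X = A * Q * D
  have hAX : A * (B * (Pᵀ * A) * (Q * D)) = A * Q * D := by
    calc A * (B * (Pᵀ * A) * (Q * D)) = (A * (B * (Pᵀ * A))) * (Q * D) := by simp only [Matrix.mul_assoc]
      _ = A * (Q * D) := by rw [key1]
      _ = A * Q * D := by rw [Matrix.mul_assoc]
  -- X * A = B * (Pᵀ A)
  have hXA : (B * (Pᵀ * A) * (Q * D)) * A = B * (Pᵀ * A) := by
    calc (B * (Pᵀ * A) * (Q * D)) * A = B * (Pᵀ * ((A * Q * D) * A)) := by simp only [Matrix.mul_assoc]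
      _ = B * (Pᵀ * A) := by rw [key2]
  refine ⟨?_, ?_, ?_, ?_⟩
  · rw [hAX, key2]
  · rw [hXA]
    calc B * (Pᵀ * A) * (B * (Pᵀ * A) * (Q * D))
        = (B * (Pᵀ * A) * B) * ((Pᵀ * A) * (Q * D)) := by simp only [Matrix.mul_assoc]
      _ = B * ((Pᵀ * A) * (Q * D)) := by rw [hB2]
      _ = B * (Pᵀ * A) * (Q * D) := by simp only [Matrix.mul_assoc]
  · rw [hXA]
    simpa using hB3
  · rw [hAX]
    simpa [Matrix.mul_assoc] using hD4
end

section
/- Let A be a real m×n matrix and P a real m×p matrix with rank(Pᵀ A) = rank(A). If B is a Moore–Penrose pseudoinverse of Pᵀ A and G is a Moore–Penrose pseudoinverse of A, then B (Pᵀ A) = G A, i.e., (Pᵀ A)⁺ (Pᵀ A) = A⁺ A. -/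
open Matrix

lemma exists_factor {n m p : ℕ} (X : Matrix (Fin n) (Fin m) ℝ) (Y : Matrix (Fin n) (Fin p) ℝ)
    (hle : LinearMap.range X.mulVecLin ≤ LinearMap.range Y.mulVecLin) :
    ∃ C : Matrix (Fin p) (Fin m) ℝ, Y * C = X := by
  have key : ∀ j : Fin m, ∃ c : Fin p → ℝ, Y.mulVec c = fun i => X i j := by
    intro j
    have : (fun i => X i j) ∈ LinearMap.range Y.mulVecLin := by
      apply hle
      exact ⟨Pi.single j 1, by simp [Matrix.mulVecLin_apply]; rfl⟩
    obtain ⟨c, hc⟩ := this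
    exact ⟨c, hc⟩
  choose c hc using key
  refine ⟨Matrix.of fun i j => c j i, ?_⟩
  ext i j
  have := congrFun (hc j) i
  simpa [Matrix.mulVec, Matrix.mul_apply, dotProduct] using this

/-- If `rank (Pᵀ A) = rank A` then `(Pᵀ A)⁺ (Pᵀ A) = A⁺ A`. -/
theorem pinv_mul_self_of_rank_eq (m n p : ℕ)
    (A : Matrix (Fin m) (Fin n) ℝ) (P : Matrix (Fin m) (Fin p) ℝ)
    (h : (Pᵀ * A).rank = A.rank)
    (B : Matrix (Fin n) (Fin p) ℝ) (G : Matrix (Fin n) (Fin m) ℝ)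
    (hB : IsMoorePenrose (Pᵀ * A) B) (hG : IsMoorePenrose A G) :
    B * (Pᵀ * A) = G * A := by
  set M := Pᵀ * A with hM
  -- range of Mᵀ ≤ range of Aᵀ
  have htr : Mᵀ = Aᵀ * P := by rw [hM, Matrix.transpose_mul, Matrix.transpose_transpose]
  have hle : LinearMap.range Mᵀ.mulVecLin ≤ LinearMap.range Aᵀ.mulVecLin := by
    rw [htr, Matrix.mulVecLin_mul]
    exact LinearMap.range_comp_le_range _ _
  have hrank : Mᵀ.rank = Aᵀ.rank := by
    rw [Matrix.rank_transpose, Matrix.rank_transpose, h]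
  have heq : LinearMap.range Mᵀ.mulVecLin = LinearMap.range Aᵀ.mulVecLin :=
    Submodule.eq_of_le_of_finrank_le hle (le_of_eq hrank.symm)
  obtain ⟨C, hC⟩ := exists_factor Aᵀ Mᵀ (heq ▸ le_refl _)
  have hA : Cᵀ * M = A := by
    have := congrArg Matrix.transpose hC
    rwa [Matrix.transpose_mul, Matrix.transpose_transpose] at this
  obtain ⟨hB1, _, hB3, _⟩ := hB
  obtain ⟨hG1, _, hG3, _⟩ := hG
  set E := B * M with hE
  set F := G * A with hF
  have hAE : A * E = A := by
    rw [← hA, hE, Matrix.mul_assoc, ← Matrix.mul_assoc M, hB1]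
  have hFE : F * E = F := by rw [hF, Matrix.mul_assoc, hAE]
  have hMF : M * F = M := by
    rw [hM, hF, Matrix.mul_assoc, ← Matrix.mul_assoc A, hG1]
  have hEF : E * F = E := by rw [hE, Matrix.mul_assoc, hMF]
  calc E = Eᵀ := hB3.symm
    _ = (E * F)ᵀ := by rw [hEF]
    _ = Fᵀ * Eᵀ := by rw [Matrix.transpose_mul]
    _ = F * E := by rw [hB3, hG3]
    _ = F := hFE
end

section
/- Let A be a real m×n matrix and Q a real n×q matrix with rank(A Q) = rank(A). If D is a Moore–Penrose pseudoinverse of A Q and G is a Moore–Penrose pseudoinverse of A, then (A Q) D = A G, i.e., (A Q)(A Q)⁺ = A A⁺. -/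
open Matrix

/-- If `rank (A Q) = rank A` then `(A Q)(A Q)⁺ = A A⁺`. -/
theorem self_mul_pinv_of_rank_eq (m n q : ℕ)
    (A : Matrix (Fin m) (Fin n) ℝ) (Q : Matrix (Fin n) (Fin q) ℝ)
    (h : (A * Q).rank = A.rank)
    (D : Matrix (Fin q) (Fin m) ℝ) (G : Matrix (Fin n) (Fin m) ℝ)
    (hD : IsMoorePenrose (A * Q) D) (hG : IsMoorePenrose A G) :
    (A * Q) * D = A * G := by
  have hle : LinearMap.range (A * Q).mulVecLin ≤ LinearMap.range A.mulVecLin := by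
    rw [Matrix.mulVecLin_mul]
    exact LinearMap.range_comp_le_range _ _
  have hrange : LinearMap.range (A * Q).mulVecLin = LinearMap.range A.mulVecLin :=
    Submodule.eq_of_le_of_finrank_eq hle h
  -- P * A = A where P = A*Q*D
  have key : ∀ x, (A * Q * D * A).mulVec x = A.mulVec x := by
    intro x
    have hx : A.mulVec x ∈ LinearMap.range (A * Q).mulVecLin := by
      rw [hrange]; exact ⟨x, rfl⟩
    obtain ⟨y, hy⟩ := hx
    simp only [Matrix.mulVecLin_apply] at hy
    calc (A * Q * D * A).mulVec x = (A * Q * D).mulVec (A.mulVec x) := by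
          rw [← Matrix.mulVec_mulVec]
      _ = (A * Q * D).mulVec ((A * Q).mulVec y) := by rw [hy]
      _ = (A * Q * D * (A * Q)).mulVec y := by rw [Matrix.mulVec_mulVec]
      _ = (A * Q).mulVec y := by rw [hD.1]
      _ = A.mulVec x := hy
  have hPA : A * Q * D * A = A := by
    ext i j
    have := congrFun (key (Pi.single j 1)) i
    simpa [Matrix.mulVec_single] using this
  have h1 : A * G * (A * Q * D) = A * Q * D := by
    rw [← Matrix.mul_assoc, ← Matrix.mul_assoc, hG.1]
  have h2 : A * Q * D * (A * G) = A * G := by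
    rw [← Matrix.mul_assoc, hPA]
  have h3 := congrArg Matrix.transpose h1
  rw [Matrix.transpose_mul, hD.2.2.2, hG.2.2.2, h2] at h3
  exact h3.symm
end

section
/- (Greville's reverse order law) Let C be a real m×k matrix and R a real k×n matrix, with B a Moore–Penrose pseudoinverse of C and D a Moore–Penrose pseudoinverse of R. Then D B is a Moore–Penrose pseudoinverse of C R if and only if the column space of R Rᵀ Cᵀ is contained in the column space of Cᵀ and the column space of Cᵀ C R is contained in the column space of R. -/
open Matrix

private lemma tmul_zero {a b : ℕ} {M : Matrix (Fin a) (Fin b) ℝ} (h : Mᵀ * M = 0) : M = 0 := by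
  have h2 : Mᴴ * M = 0 := by rwa [Matrix.conjTranspose_eq_transpose_of_trivial]
  exact Matrix.conjTranspose_mul_self_eq_zero.mp h2


private lemma cancel_left {a b c : ℕ} (C : Matrix (Fin a) (Fin b) ℝ)
    {X Y : Matrix (Fin b) (Fin c) ℝ} (h : Cᵀ * (C * X) = Cᵀ * (C * Y)) : C * X = C * Y := by
  have hz : (C * X - C * Y)ᵀ * (C * X - C * Y) = 0 := by
    simp only [Matrix.transpose_sub, Matrix.transpose_mul, Matrix.sub_mul, Matrix.mul_sub,
      Matrix.mul_assoc]
    rw [h]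
    abel
  exact sub_eq_zero.mp (tmul_zero hz)

private lemma range_le_iff {a b c : ℕ} (M : Matrix (Fin a) (Fin b) ℝ)
    (N : Matrix (Fin b) (Fin a) ℝ) (hMNM : M * (N * M) = M) (X : Matrix (Fin a) (Fin c) ℝ) :
    LinearMap.range X.mulVecLin ≤ LinearMap.range M.mulVecLin ↔ M * (N * X) = X := by
  constructor
  · intro h
    ext i j
    obtain ⟨u, hu⟩ := h ⟨Pi.single j 1, rfl⟩
    simp only [Matrix.mulVecLin_apply] at hu
    have key : (M * (N * X)) *ᵥ (Pi.single j 1) = X *ᵥ (Pi.single j 1) := by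
      rw [← Matrix.mulVec_mulVec, ← Matrix.mulVec_mulVec, ← hu, Matrix.mulVec_mulVec,
        Matrix.mulVec_mulVec, Matrix.mul_assoc, hMNM, hu]
    have := congrFun key i
    simpa [Matrix.mulVec_single_one] using this
  · rintro h y ⟨v, rfl⟩
    exact ⟨(N * X) *ᵥ v, by simp only [Matrix.mulVecLin_apply, Matrix.mulVec_mulVec, h]⟩

private lemma mp_transpose {a b : ℕ} {A : Matrix (Fin a) (Fin b) ℝ}
    {B : Matrix (Fin b) (Fin a) ℝ} (h : IsMoorePenrose A B) : IsMoorePenrose Aᵀ Bᵀ := by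
  obtain ⟨h1, h2, h3, h4⟩ := h
  refine ⟨?_, ?_, ?_, ?_⟩
  · rw [← Matrix.transpose_mul, ← Matrix.transpose_mul, ← Matrix.mul_assoc, h1]
  · rw [← Matrix.transpose_mul, ← Matrix.transpose_mul, ← Matrix.mul_assoc, h2]
  · rw [← Matrix.transpose_mul, h4]; exact h4
  · rw [← Matrix.transpose_mul, h3]; exact h3

private lemma nec2 {m k n : ℕ} {C : Matrix (Fin m) (Fin k) ℝ} {R : Matrix (Fin k) (Fin n) ℝ}
    {B : Matrix (Fin k) (Fin m) ℝ} {D : Matrix (Fin n) (Fin k) ℝ}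
    (hB : IsMoorePenrose C B) (hD : IsMoorePenrose R D)
    (hE : IsMoorePenrose (C * R) (D * B)) :
    R * (D * (Cᵀ * (C * R))) = Cᵀ * (C * R) := by
  obtain ⟨hB1, hB2, hB3, hB4⟩ := hB
  obtain ⟨hD1, hD2, hD3, hD4⟩ := hD
  obtain ⟨a, b, c, d⟩ := hE
  -- basic transpose conversion facts
  have tCB : Cᵀ * Bᵀ = B * C := by rw [← hB3, Matrix.transpose_mul]
  have tDR : Dᵀ * Rᵀ = R * D := by rw [← hD4, Matrix.transpose_mul]
  have tCB' : ∀ {p : ℕ} (X : Matrix (Fin k) (Fin p) ℝ), Cᵀ * (Bᵀ * X) = B * (C * X) := by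
    intro p X
    have := congrArg (· * X) tCB
    simpa only [Matrix.mul_assoc] using this
  have tDR' : ∀ {p : ℕ} (X : Matrix (Fin k) (Fin p) ℝ), Dᵀ * (Rᵀ * X) = R * (D * X) := by
    intro p X
    have := congrArg (· * X) tDR
    simpa only [Matrix.mul_assoc] using this
  have F2' : ∀ {p : ℕ} (X : Matrix (Fin m) (Fin p) ℝ), B * (C * (B * X)) = B * X := by
    intro p X
    have := congrArg (· * X) hB2
    simpa only [Matrix.mul_assoc] using this
  have F3' : ∀ {p : ℕ} (X : Matrix (Fin n) (Fin p) ℝ), R * (D * (R * X)) = R * X := by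
    intro p X
    have := congrArg (· * X) hD1
    simpa only [Matrix.mul_assoc] using this
  have F4' : ∀ {p : ℕ} (X : Matrix (Fin k) (Fin p) ℝ), D * (R * (D * X)) = D * X := by
    intro p X
    have := congrArg (· * X) hD2
    simpa only [Matrix.mul_assoc] using this
  -- s1 : C*R = Bᵀ Dᵀ Rᵀ Cᵀ C R
  have s1 : C * R = Bᵀ * (Dᵀ * (Rᵀ * (Cᵀ * (C * R)))) := by
    calc C * R = C * R * (D * B) * (C * R) := a.symm
      _ = (C * R * (D * B))ᵀ * (C * R) := by rw [d]
      _ = Bᵀ * (Dᵀ * (Rᵀ * (Cᵀ * (C * R)))) := by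
          simp only [Matrix.transpose_mul, Matrix.mul_assoc]
  have s2 : Cᵀ * (C * R) = B * (C * (Dᵀ * (Rᵀ * (Cᵀ * (C * R))))) := by
    calc Cᵀ * (C * R) = Cᵀ * (Bᵀ * (Dᵀ * (Rᵀ * (Cᵀ * (C * R))))) := by conv_lhs => rw [s1]
      _ = B * (C * (Dᵀ * (Rᵀ * (Cᵀ * (C * R))))) := tCB' _
  have s3' : ∀ {p : ℕ} (X : Matrix (Fin k) (Fin p) ℝ),
      B * (C * (R * (D * (B * (C * (R * (D * X))))))) = B * (C * (R * (D * X))) := by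
    intro p X
    have := congrArg (fun Z => B * (Z * (D * X))) a
    simpa only [Matrix.mul_assoc] using this
  have s4b : D * (B * (C * (R * (D * (B * C))))) = D * (B * C) := by
    have := congrArg (· * C) b
    simpa only [Matrix.mul_assoc] using this
  have s4t : B * (C * (R * (D * (B * (C * Dᵀ))))) = B * (C * Dᵀ) := by
    have h := congrArg Matrix.transpose s4b
    simp only [Matrix.transpose_mul, Matrix.mul_assoc] at h
    rw [tCB', tCB', tDR'] at h
    exact h
  -- the Z-argument
  have hZ : (R * (D * (B * (C * Dᵀ))) - B * (C * (R * (D * (B * (C * Dᵀ))))))ᵀ *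
      (R * (D * (B * (C * Dᵀ))) - B * (C * (R * (D * (B * (C * Dᵀ)))))) = 0 := by
    simp only [Matrix.transpose_sub, Matrix.transpose_mul, Matrix.transpose_transpose,
      Matrix.sub_mul, Matrix.mul_sub, Matrix.mul_assoc]
    simp only [tCB', tDR', F2', F3', F4', s3']
    abel
  have s5b := sub_eq_zero.mp (tmul_zero hZ)
  rw [s4t] at s5b
  -- s5b : R * (D * (B * (C * Dᵀ))) = B * (C * Dᵀ)
  have s5' : ∀ {p : ℕ} (X : Matrix (Fin n) (Fin p) ℝ),
      R * (D * (B * (C * (Dᵀ * X)))) = B * (C * (Dᵀ * X)) := by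
    intro p X
    have := congrArg (· * X) s5b
    simpa only [Matrix.mul_assoc] using this
  conv_lhs => rw [s2]
  rw [s5']
  exact s2.symm

private lemma suf {m k n : ℕ} {C : Matrix (Fin m) (Fin k) ℝ} {R : Matrix (Fin k) (Fin n) ℝ}
    {B : Matrix (Fin k) (Fin m) ℝ} {D : Matrix (Fin n) (Fin k) ℝ}
    (hB : IsMoorePenrose C B) (hD : IsMoorePenrose R D)
    (h1 : Cᵀ * (Bᵀ * (R * (Rᵀ * Cᵀ))) = R * (Rᵀ * Cᵀ))
    (h2 : R * (D * (Cᵀ * (C * R))) = Cᵀ * (C * R)) :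
    IsMoorePenrose (C * R) (D * B) := by
  obtain ⟨hB1, hB2, hB3, hB4⟩ := hB
  obtain ⟨hD1, hD2, hD3, hD4⟩ := hD
  -- transpose conversion facts
  have tCB : Cᵀ * Bᵀ = B * C := by rw [← hB3, Matrix.transpose_mul]
  have tBC : Bᵀ * Cᵀ = C * B := by rw [← hB4, Matrix.transpose_mul]
  have tDR : Dᵀ * Rᵀ = R * D := by rw [← hD4, Matrix.transpose_mul]
  have tRD : Rᵀ * Dᵀ = D * R := by rw [← hD3, Matrix.transpose_mul]
  have tCB' : ∀ {p : ℕ} (X : Matrix (Fin k) (Fin p) ℝ), Cᵀ * (Bᵀ * X) = B * (C * X) := by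
    intro p X; have := congrArg (· * X) tCB; simpa only [Matrix.mul_assoc] using this
  have tBC' : ∀ {p : ℕ} (X : Matrix (Fin m) (Fin p) ℝ), Bᵀ * (Cᵀ * X) = C * (B * X) := by
    intro p X; have := congrArg (· * X) tBC; simpa only [Matrix.mul_assoc] using this
  have tDR' : ∀ {p : ℕ} (X : Matrix (Fin k) (Fin p) ℝ), Dᵀ * (Rᵀ * X) = R * (D * X) := by
    intro p X; have := congrArg (· * X) tDR; simpa only [Matrix.mul_assoc] using this
  have tRD' : ∀ {p : ℕ} (X : Matrix (Fin n) (Fin p) ℝ), Rᵀ * (Dᵀ * X) = D * (R * X) := by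
    intro p X; have := congrArg (· * X) tRD; simpa only [Matrix.mul_assoc] using this
  -- Penrose product facts with tails
  have F1' : ∀ {p : ℕ} (X : Matrix (Fin k) (Fin p) ℝ), C * (B * (C * X)) = C * X := by
    intro p X; have := congrArg (· * X) hB1; simpa only [Matrix.mul_assoc] using this
  have F2b : B * (C * B) = B := by rw [← Matrix.mul_assoc]; exact hB2
  have F3b : R * (D * R) = R := by rw [← Matrix.mul_assoc]; exact hD1
  have F4b : D * (R * D) = D := by rw [← Matrix.mul_assoc]; exact hD2
  have F3' : ∀ {p : ℕ} (X : Matrix (Fin n) (Fin p) ℝ), R * (D * (R * X)) = R * X := by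
    intro p X; have := congrArg (· * X) hD1; simpa only [Matrix.mul_assoc] using this
  have F4' : ∀ {p : ℕ} (X : Matrix (Fin k) (Fin p) ℝ), D * (R * (D * X)) = D * X := by
    intro p X; have := congrArg (· * X) hD2; simpa only [Matrix.mul_assoc] using this
  have F5b : Cᵀ * (Bᵀ * Cᵀ) = Cᵀ := by
    have := congrArg Matrix.transpose hB1
    simpa only [Matrix.transpose_mul, Matrix.mul_assoc] using this
  have F6b : Rᵀ * (Dᵀ * Rᵀ) = Rᵀ := by
    have := congrArg Matrix.transpose hD1
    simpa only [Matrix.transpose_mul, Matrix.mul_assoc] using this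
  have fGB : Cᵀ * (C * B) = Cᵀ := by rw [← tBC]; exact F5b
  have fDS : D * (R * Rᵀ) = Rᵀ := by
    rw [← Matrix.mul_assoc, ← hD3, Matrix.transpose_mul, Matrix.mul_assoc, F6b]
  have fDS' : ∀ {p : ℕ} (X : Matrix (Fin k) (Fin p) ℝ), D * (R * (Rᵀ * X)) = Rᵀ * X := by
    intro p X; have := congrArg (· * X) fDS; simpa only [Matrix.mul_assoc] using this
  -- commutation relations from h1 h2
  have h2d : R * (D * (Cᵀ * (C * (R * D)))) = Cᵀ * (C * (R * D)) := by
    have := congrArg (· * D) h2; simpa only [Matrix.mul_assoc] using this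
  have hYsym : (Cᵀ * (C * (R * D)))ᵀ = Cᵀ * (C * (R * D)) := by
    conv_lhs => rw [← h2d]
    simp only [Matrix.transpose_mul, Matrix.transpose_transpose, Matrix.mul_assoc]
    rw [tDR', tDR]
    exact h2d
  have comm2 : R * (D * (Cᵀ * C)) = Cᵀ * (C * (R * D)) := by
    have e : (Cᵀ * (C * (R * D)))ᵀ = R * (D * (Cᵀ * C)) := by
      simp only [Matrix.transpose_mul, Matrix.transpose_transpose, Matrix.mul_assoc]
      rw [tDR']
    exact e.symm.trans hYsym
  have comm2' : ∀ {p : ℕ} (X : Matrix (Fin k) (Fin p) ℝ),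
      R * (D * (Cᵀ * (C * X))) = Cᵀ * (C * (R * (D * X))) := by
    intro p X; have := congrArg (· * X) comm2; simpa only [Matrix.mul_assoc] using this
  have h1' : B * (C * (R * (Rᵀ * Cᵀ))) = R * (Rᵀ * Cᵀ) := by rw [← tCB']; exact h1
  have h1b : B * (C * (R * (Rᵀ * (B * C)))) = R * (Rᵀ * (B * C)) := by
    have := congrArg (· * Bᵀ) h1'
    simp only [Matrix.mul_assoc] at this
    rw [tCB] at this
    exact this
  have hXsym : (R * (Rᵀ * (B * C)))ᵀ = R * (Rᵀ * (B * C)) := by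
    conv_lhs => rw [← h1b]
    simp only [Matrix.transpose_mul, Matrix.transpose_transpose, Matrix.mul_assoc]
    rw [tCB', tCB]
    exact h1b
  have comm1 : B * (C * (R * Rᵀ)) = R * (Rᵀ * (B * C)) := by
    have e : (R * (Rᵀ * (B * C)))ᵀ = B * (C * (R * Rᵀ)) := by
      simp only [Matrix.transpose_mul, Matrix.transpose_transpose, Matrix.mul_assoc]
      rw [tCB']
    exact e.symm.trans hXsym
  have comm1' : ∀ {p : ℕ} (X : Matrix (Fin k) (Fin p) ℝ),
      B * (C * (R * (Rᵀ * X))) = R * (Rᵀ * (B * (C * X))) := by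
    intro p X; have := congrArg (· * X) comm1; simpa only [Matrix.mul_assoc] using this
  -- g1
  have key1 : Cᵀ * (C * (R * (D * (B * (C * R))))) = Cᵀ * (C * R) := by
    rw [← comm2', F1', h2]
  have g1 : C * R * (D * B) * (C * R) = C * R := by
    have := cancel_left C key1
    simpa only [Matrix.mul_assoc] using this
  -- g4
  have I4 : Bᵀ * (R * (D * Cᵀ)) = C * (R * (D * B)) := by
    have h := congrArg (fun Z => Bᵀ * (Z * B)) comm2
    simp only [Matrix.mul_assoc] at h
    rw [fGB, tBC', F1'] at h
    exact h
  have g4 : (C * R * (D * B))ᵀ = C * R * (D * B) := by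
    calc (C * R * (D * B))ᵀ = Bᵀ * (Dᵀ * (Rᵀ * Cᵀ)) := by
          simp only [Matrix.transpose_mul, Matrix.mul_assoc]
      _ = Bᵀ * (R * (D * Cᵀ)) := by rw [tDR']
      _ = C * (R * (D * B)) := I4
      _ = C * R * (D * B) := by simp only [Matrix.mul_assoc]
  -- g3
  have I3 : D * (B * (C * R)) = Rᵀ * (B * (C * Dᵀ)) := by
    have h := congrArg (fun Z => D * (Z * Dᵀ)) comm1
    simp only [Matrix.mul_assoc] at h
    rw [tRD, F3b, fDS'] at h
    exact h
  have g3 : (D * B * (C * R))ᵀ = D * B * (C * R) := by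
    calc (D * B * (C * R))ᵀ = Rᵀ * (Cᵀ * (Bᵀ * Dᵀ)) := by
          simp only [Matrix.transpose_mul, Matrix.mul_assoc]
      _ = Rᵀ * (B * (C * Dᵀ)) := by rw [tCB']
      _ = D * (B * (C * R)) := I3.symm
      _ = D * B * (C * R) := by simp only [Matrix.mul_assoc]
  -- g2 machinery
  have f_STq : R * (Rᵀ * (Dᵀ * D)) = R * D := by rw [tRD', F3']
  have f_STq' : ∀ {p : ℕ} (X : Matrix (Fin k) (Fin p) ℝ),
      R * (Rᵀ * (Dᵀ * (D * X))) = R * (D * X) := by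
    intro p X; have := congrArg (· * X) f_STq; simpa only [Matrix.mul_assoc] using this
  have f_TSq : Dᵀ * (D * (R * Rᵀ)) = R * D := by rw [fDS, tDR]
  have f_TSq' : ∀ {p : ℕ} (X : Matrix (Fin k) (Fin p) ℝ),
      Dᵀ * (D * (R * (Rᵀ * X))) = R * (D * X) := by
    intro p X; have := congrArg (· * X) f_TSq; simpa only [Matrix.mul_assoc] using this
  have f_TQ : Dᵀ * (D * (R * D)) = Dᵀ * D := by rw [F4b]
  have f_TQ' : ∀ {p : ℕ} (X : Matrix (Fin k) (Fin p) ℝ),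
      Dᵀ * (D * (R * (D * X))) = Dᵀ * (D * X) := by
    intro p X; have := congrArg (· * X) f_TQ; simpa only [Matrix.mul_assoc] using this
  have f_QT : R * (D * (Dᵀ * D)) = Dᵀ * D := by
    have h := congrArg Matrix.transpose f_TQ
    simp only [Matrix.transpose_mul, Matrix.transpose_transpose, Matrix.mul_assoc] at h
    rw [tDR'] at h
    exact h
  have f_TTS : Dᵀ * (D * (Dᵀ * (D * (R * Rᵀ)))) = Dᵀ * D := by rw [f_TSq, f_TQ]
  have f_TTS' : ∀ {p : ℕ} (X : Matrix (Fin k) (Fin p) ℝ),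
      Dᵀ * (D * (Dᵀ * (D * (R * (Rᵀ * X))))) = Dᵀ * (D * X) := by
    intro p X; have := congrArg (· * X) f_TTS; simpa only [Matrix.mul_assoc] using this
  have f_STT : R * (Rᵀ * (Dᵀ * (D * (Dᵀ * D)))) = Dᵀ * D := by rw [f_STq', f_QT]
  have f_STT' : ∀ {p : ℕ} (X : Matrix (Fin k) (Fin p) ℝ),
      R * (Rᵀ * (Dᵀ * (D * (Dᵀ * (D * X))))) = Dᵀ * (D * X) := by
    intro p X; have := congrArg (· * X) f_STT; simpa only [Matrix.mul_assoc] using this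
  have hPQa : B * (C * (R * D)) = R * (Rᵀ * (B * (C * (Dᵀ * D)))) := by
    conv_lhs => rw [← f_STq]
    rw [comm1']
  have hQPQ : R * (D * (B * (C * (R * D)))) = B * (C * (R * D)) := by
    conv_lhs => rw [hPQa]
    rw [F3']
    exact hPQa.symm
  have hPQsym : (B * (C * (R * D)))ᵀ = B * (C * (R * D)) := by
    conv_lhs => rw [← hQPQ]
    simp only [Matrix.transpose_mul, Matrix.transpose_transpose, Matrix.mul_assoc]
    rw [tDR', tCB', tDR]
    exact hQPQ
  have hQP : R * (D * (B * C)) = B * (C * (R * D)) := by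
    have e : (B * (C * (R * D)))ᵀ = R * (D * (B * C)) := by
      simp only [Matrix.transpose_mul, Matrix.transpose_transpose, Matrix.mul_assoc]
      rw [tDR', tCB]
    exact e.symm.trans hPQsym
  have m1 : R * (Rᵀ * (B * (C * (Dᵀ * D)))) = R * (Rᵀ * (Dᵀ * (D * (B * C)))) := by
    rw [← hPQa, f_STq', hQP]
  have m2 : B * (C * (Dᵀ * (D * (R * Rᵀ)))) = Dᵀ * (D * (B * (C * (R * Rᵀ)))) := by
    rw [f_TSq, comm1, f_TSq', hQP]
  have m2' : ∀ {p : ℕ} (X : Matrix (Fin k) (Fin p) ℝ),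
      B * (C * (Dᵀ * (D * (R * (Rᵀ * X))))) = Dᵀ * (D * (B * (C * (R * (Rᵀ * X))))) := by
    intro p X; have := congrArg (· * X) m2; simpa only [Matrix.mul_assoc] using this
  have hTM : Dᵀ * (D * (B * (C * (Dᵀ * D)))) = Dᵀ * (D * (Dᵀ * (D * (B * C)))) := by
    conv_lhs => rw [← f_TTS' (B * (C * (Dᵀ * D)))]
    rw [m1, f_STq', f_TQ']
  have hMT : B * (C * (Dᵀ * (D * (Dᵀ * D)))) = Dᵀ * (D * (B * (C * (Dᵀ * D)))) := by
    conv_lhs => rw [← f_STT]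
    rw [m2', f_STT]
  have hPTT : B * (C * (Dᵀ * (D * (Dᵀ * D)))) = Dᵀ * (D * (Dᵀ * (D * (B * C)))) :=
    hMT.trans hTM
  have fPTc : B * (C * (Dᵀ * D)) = Dᵀ * (D * (B * C)) := by
    conv_lhs => rw [← f_STT]
    rw [comm1', hPTT, f_STT']
  have fPTc' : ∀ {p : ℕ} (X : Matrix (Fin k) (Fin p) ℝ),
      B * (C * (Dᵀ * (D * X))) = Dᵀ * (D * (B * (C * X))) := by
    intro p X; have := congrArg (· * X) fPTc; simpa only [Matrix.mul_assoc] using this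
  have g2 : D * B * (C * R) * (D * B) = D * B := by
    have key : D * (B * (C * (R * (D * B)))) = D * B := by
      conv_lhs => rw [← f_STq' B]
      rw [comm1', fPTc', F2b, tRD', F4', F4']
    simpa only [Matrix.mul_assoc] using key
  exact ⟨g1, g2, g3, g4⟩

/-- Greville's reverse order law: `R⁺ C⁺` is the pseudoinverse of `C R` iff
the column space of `R Rᵀ Cᵀ` is contained in the column space of `Cᵀ` and
the column space of `Cᵀ C R` is contained in the column space of `R`. -/
theorem greville_reverse_order_law (m k n : ℕ)
    (C : Matrix (Fin m) (Fin k) ℝ) (R : Matrix (Fin k) (Fin n) ℝ)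
    (B : Matrix (Fin k) (Fin m) ℝ) (D : Matrix (Fin n) (Fin k) ℝ)
    (hB : IsMoorePenrose C B) (hD : IsMoorePenrose R D) :
    IsMoorePenrose (C * R) (D * B) ↔
      LinearMap.range (R * Rᵀ * Cᵀ).mulVecLin ≤ LinearMap.range (Cᵀ).mulVecLin ∧
        LinearMap.range (Cᵀ * C * R).mulVecLin ≤ LinearMap.range R.mulVecLin := by
  have hCt : Cᵀ * (Bᵀ * Cᵀ) = Cᵀ := by
    have := congrArg Matrix.transpose hB.1
    simpa only [Matrix.transpose_mul, Matrix.mul_assoc] using this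
  have hR : R * (D * R) = R := by rw [← Matrix.mul_assoc]; exact hD.1
  rw [range_le_iff Cᵀ Bᵀ hCt (R * Rᵀ * Cᵀ), range_le_iff R D hR (Cᵀ * C * R)]
  constructor
  · intro hE
    constructor
    · have hEt : IsMoorePenrose (Rᵀ * Cᵀ) (Bᵀ * Dᵀ) := by
        have := mp_transpose hE
        rwa [Matrix.transpose_mul, Matrix.transpose_mul] at this
      have := nec2 (mp_transpose hD) (mp_transpose hB) hEt
      simpa only [Matrix.transpose_transpose, Matrix.mul_assoc] using this
    · have := nec2 hB hD hE
      simpa only [Matrix.mul_assoc] using this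
  · rintro ⟨h1, h2⟩
    simp only [Matrix.mul_assoc] at h1 h2
    exact suf hB hD h1 h2
end

section
/- Let C be a real m×k matrix and R a real k×n matrix, with B a Moore–Penrose pseudoinverse of C and D a Moore–Penrose pseudoinverse of R, and set A = C R. If D B is a Moore–Penrose pseudoinverse of C R, then B C (R Aᵀ) = R Aᵀ and R D (Cᵀ A) = Cᵀ A. -/
open Matrix

/-- A symmetric idempotent `E` with `Hᵀ E H = Hᵀ H` fixes `H`. -/
lemma proj_fix {p q : ℕ} (E : Matrix (Fin p) (Fin p) ℝ) (H : Matrix (Fin p) (Fin q) ℝ)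
    (hsym : Eᵀ = E) (hid : E * E = E) (hL : Hᵀ * (E * H) = Hᵀ * H) :
    E * H = H := by
  have h0 : (E * H - H)ᵀ * (E * H - H) = 0 := by
    rw [Matrix.transpose_sub, Matrix.sub_mul, Matrix.mul_sub, Matrix.mul_sub,
      Matrix.transpose_mul, hsym, Matrix.mul_assoc Hᵀ E (E * H), ← Matrix.mul_assoc E E H,
      hid, hL, Matrix.mul_assoc Hᵀ E H, hL]
    simp
  have h1 : (E * H - H)ᴴ * (E * H - H) = 0 := by
    rwa [Matrix.conjTranspose_eq_transpose_of_trivial]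
  exact sub_eq_zero.mp (Matrix.conjTranspose_mul_self_eq_zero.mp h1)

/-- If the reverse order law holds for `A = C R`, then
`C⁺ C (R Aᵀ) = R Aᵀ` and `R R⁺ (Cᵀ A) = Cᵀ A`. -/
theorem reverse_order_law_demands (m k n : ℕ)
    (C : Matrix (Fin m) (Fin k) ℝ) (R : Matrix (Fin k) (Fin n) ℝ)
    (B : Matrix (Fin k) (Fin m) ℝ) (D : Matrix (Fin n) (Fin k) ℝ)
    (hB : IsMoorePenrose C B) (hD : IsMoorePenrose R D)
    (A : Matrix (Fin m) (Fin n) ℝ) (hA : A = C * R)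
    (hrev : IsMoorePenrose (C * R) (D * B)) :
    B * C * (R * Aᵀ) = R * Aᵀ ∧ R * D * (Cᵀ * A) = Cᵀ * A := by
  obtain ⟨hB1, hB2, hB3, hB4⟩ := hB
  obtain ⟨hD1, hD2, hD3, hD4⟩ := hD
  obtain ⟨h1, h2, h3, h4⟩ := hrev
  subst hA
  -- Aᵀ = (DBA)ᵀ Aᵀ = D B A Aᵀ
  have k1 : (C * R)ᵀ = D * B * (C * R) * (C * R)ᵀ := by
    conv_lhs => rw [← h1, Matrix.mul_assoc (C * R) (D * B) (C * R)]
    rw [Matrix.transpose_mul, h3]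
  have k1' : Rᵀ * Cᵀ = D * (B * (C * (R * (Rᵀ * Cᵀ)))) := by
    have := k1
    simp only [Matrix.transpose_mul, Matrix.mul_assoc] at this
    exact this
  -- Aᵀ = Aᵀ (A DB)ᵀ = Aᵀ A D B
  have k2 : (C * R)ᵀ = (C * R)ᵀ * (C * R) * (D * B) := by
    conv_lhs => rw [← h1]
    rw [Matrix.transpose_mul, h4]
    simp only [Matrix.mul_assoc]
  have k2' : ∀ (Y : Matrix (Fin m) (Fin n) ℝ),
      Rᵀ * (Cᵀ * Y) = Rᵀ * (Cᵀ * (C * (R * (D * (B * Y))))) := by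
    intro Y
    rw [← Matrix.mul_assoc Rᵀ Cᵀ Y, ← Matrix.transpose_mul C R]
    conv_lhs => rw [k2]
    simp only [Matrix.transpose_mul, Matrix.mul_assoc]
  -- Rᵀ (R D) = Rᵀ
  have f2 : Rᵀ * (R * D) = Rᵀ := by
    calc Rᵀ * (R * D) = Rᵀ * (R * D)ᵀ := by rw [hD4]
      _ = (R * D * R)ᵀ := by rw [Matrix.transpose_mul (R * D) R]
      _ = Rᵀ := by rw [hD1]
  have f2' : ∀ (X : Matrix (Fin k) (Fin m) ℝ),
      Rᵀ * (R * (D * X)) = Rᵀ * X := by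
    intro X
    rw [← Matrix.mul_assoc R D X, ← Matrix.mul_assoc Rᵀ (R * D) X, f2]
  -- B (C Cᵀ) = Cᵀ
  have f3 : B * (C * Cᵀ) = Cᵀ := by
    calc B * (C * Cᵀ) = B * C * Cᵀ := (Matrix.mul_assoc B C Cᵀ).symm
      _ = (B * C)ᵀ * Cᵀ := by rw [hB3]
      _ = (C * (B * C))ᵀ := by rw [← Matrix.transpose_mul C (B * C)]
      _ = (C * B * C)ᵀ := by rw [Matrix.mul_assoc]
      _ = Cᵀ := by rw [hB1]
  have f3' : ∀ (X : Matrix (Fin m) (Fin n) ℝ),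
      B * (C * (Cᵀ * X)) = Cᵀ * X := by
    intro X
    rw [← Matrix.mul_assoc C Cᵀ X, ← Matrix.mul_assoc B (C * Cᵀ) X, f3]
  constructor
  · apply proj_fix (B * C) (R * (C * R)ᵀ) hB3
    · rw [← Matrix.mul_assoc (B * C) B C, Matrix.mul_assoc B C B, ← Matrix.mul_assoc B C B, hB2]
    · simp only [Matrix.transpose_mul, Matrix.transpose_transpose, Matrix.mul_assoc]
      conv_rhs => rw [k1']
      rw [f2']
  · apply proj_fix (R * D) (Cᵀ * (C * R)) hD4
    · rw [← Matrix.mul_assoc (R * D) R D, hD1]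
    · simp only [Matrix.transpose_mul, Matrix.transpose_transpose, Matrix.mul_assoc]
      conv_rhs => rw [k2' (C * (Cᵀ * (C * R)))]
      rw [f3']
end

section
/- Let C be a real m×k matrix and R a real k×n matrix, with B a Moore–Penrose pseudoinverse of C and D a Moore–Penrose pseudoinverse of R. If D B is a Moore–Penrose pseudoinverse of C R, then C and R satisfy the two-sided projection equation B C (R Rᵀ Cᵀ C) R D = R Rᵀ Cᵀ C. -/
open Matrix

/-- A real matrix with `trace (X * Xᵀ) = 0` is zero. -/
lemma trace_mul_transpose_self_eq_zero' {p q : ℕ} {X : Matrix (Fin p) (Fin q) ℝ}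
    (h : Matrix.trace (X * Xᵀ) = 0) : X = 0 := by
  have h1 : ∑ i, ∑ j, X i j * X i j = 0 := by
    simpa [Matrix.trace, Matrix.diag, Matrix.mul_apply, Matrix.transpose_apply] using h
  ext i j
  have h2 : ∀ i ∈ (Finset.univ : Finset (Fin p)), (0:ℝ) ≤ ∑ j, X i j * X i j :=
    fun i _ => Finset.sum_nonneg fun j _ => mul_self_nonneg _
  have h3 := (Finset.sum_eq_zero_iff_of_nonneg h2).mp h1 i (Finset.mem_univ i)
  have h4 := (Finset.sum_eq_zero_iff_of_nonneg
    (fun j _ => mul_self_nonneg (X i j))).mp h3 j (Finset.mem_univ j)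
  simpa using mul_self_eq_zero.mp h4

/-- Transposes of a Moore–Penrose pair form a Moore–Penrose pair. -/
lemma isMoorePenrose_transpose {p q : ℕ} {A : Matrix (Fin p) (Fin q) ℝ}
    {B : Matrix (Fin q) (Fin p) ℝ} (h : IsMoorePenrose A B) : IsMoorePenrose Aᵀ Bᵀ := by
  obtain ⟨h1, h2, h3, h4⟩ := h
  refine ⟨?_, ?_, ?_, ?_⟩
  · calc Aᵀ * Bᵀ * Aᵀ = (A * B * A)ᵀ := by
          simp only [Matrix.transpose_mul, Matrix.mul_assoc]
      _ = Aᵀ := by rw [h1]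
  · calc Bᵀ * Aᵀ * Bᵀ = (B * A * B)ᵀ := by
          simp only [Matrix.transpose_mul, Matrix.mul_assoc]
      _ = Bᵀ := by rw [h2]
  · have e : Bᵀ * Aᵀ = (A * B)ᵀ := (Matrix.transpose_mul A B).symm
    rw [e, Matrix.transpose_transpose, h4]
  · have e : Aᵀ * Bᵀ = (B * A)ᵀ := (Matrix.transpose_mul B A).symm
    rw [e, Matrix.transpose_transpose, h3]

/-- Core lemma: reverse order law implies `C⁺C (R Rᵀ Cᵀ C) = R Rᵀ Cᵀ C`. -/
lemma aux_left (m k n : ℕ)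
    (C : Matrix (Fin m) (Fin k) ℝ) (R : Matrix (Fin k) (Fin n) ℝ)
    (B : Matrix (Fin k) (Fin m) ℝ) (D : Matrix (Fin n) (Fin k) ℝ)
    (hB : IsMoorePenrose C B) (hD : IsMoorePenrose R D)
    (hrev : IsMoorePenrose (C * R) (D * B)) :
    B * C * (R * Rᵀ * Cᵀ * C) = R * Rᵀ * Cᵀ * C := by
  obtain ⟨hB1, hB2, hB3, hB4⟩ := hB
  obtain ⟨hD1, hD2, hD3, hD4⟩ := hD
  obtain ⟨h9, h10, h11, h12⟩ := hrev
  set M : Matrix (Fin k) (Fin k) ℝ := R * Rᵀ * Cᵀ * C with hM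
  set P : Matrix (Fin k) (Fin k) ℝ := B * C * (R * Rᵀ * Cᵀ * C) with hP
  have hcb : Cᵀ * Bᵀ = B * C := by rw [← Matrix.transpose_mul, hB3]
  have hdr : Dᵀ * Rᵀ = R * D := by rw [← Matrix.transpose_mul, hD4]
  have h5 : (B * C) * (B * C) = B * C := by
    rw [show (B * C) * (B * C) = B * C * B * C from by
      simp only [Matrix.mul_assoc], hB2]
  -- claim A : trace (M * Mᵀ) = trace (P * Mᵀ)
  have claimA : Matrix.trace (M * Mᵀ) = Matrix.trace (P * Mᵀ) := by
    calc Matrix.trace (M * Mᵀ)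
        = Matrix.trace ((R * (Rᵀ * (Cᵀ * (C * Cᵀ)))) * (C * (R * Rᵀ))) := by
          simp only [hM, Matrix.transpose_mul, Matrix.transpose_transpose, Matrix.mul_assoc]
      _ = Matrix.trace ((C * (R * Rᵀ)) * (R * (Rᵀ * (Cᵀ * (C * Cᵀ))))) :=
          trace_mul_comm _ _
      _ = Matrix.trace ((C * R) * (Rᵀ * (R * (Rᵀ * (Cᵀ * (C * Cᵀ)))))) := by
          simp only [Matrix.mul_assoc]
      _ = Matrix.trace ((C * R * (D * B) * (C * R)) * (Rᵀ * (R * (Rᵀ * (Cᵀ * (C * Cᵀ)))))) := by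
          rw [h9]
      _ = Matrix.trace ((C * R) * ((D * B) * ((C * R) * (Rᵀ * (R * (Rᵀ * (Cᵀ * (C * Cᵀ)))))))) := by
          simp only [Matrix.mul_assoc]
      _ = Matrix.trace (((D * B) * ((C * R) * (Rᵀ * (R * (Rᵀ * (Cᵀ * (C * Cᵀ))))))) * (C * R)) :=
          trace_mul_comm _ _
      _ = Matrix.trace ((D * B * (C * R)) * (Rᵀ * (R * (Rᵀ * (Cᵀ * (C * (Cᵀ * (C * R)))))))) := by
          simp only [Matrix.mul_assoc]
      _ = Matrix.trace (((D * B * (C * R))ᵀ) * (Rᵀ * (R * (Rᵀ * (Cᵀ * (C * (Cᵀ * (C * R)))))))) := by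
          rw [h11]
      _ = Matrix.trace ((Rᵀ * (Cᵀ * (Bᵀ * Dᵀ))) * (Rᵀ * (R * (Rᵀ * (Cᵀ * (C * (Cᵀ * (C * R)))))))) := by
          simp only [Matrix.transpose_mul, Matrix.mul_assoc]
      _ = Matrix.trace (Rᵀ * ((Cᵀ * (Bᵀ * Dᵀ)) * (Rᵀ * (R * (Rᵀ * (Cᵀ * (C * (Cᵀ * (C * R))))))))) := by
          simp only [Matrix.mul_assoc]
      _ = Matrix.trace (((Cᵀ * (Bᵀ * Dᵀ)) * (Rᵀ * (R * (Rᵀ * (Cᵀ * (C * (Cᵀ * (C * R)))))))) * Rᵀ) :=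
          trace_mul_comm _ _
      _ = Matrix.trace ((Cᵀ * Bᵀ) * ((Dᵀ * Rᵀ) * (R * (Rᵀ * (Cᵀ * (C * (Cᵀ * (C * (R * Rᵀ))))))))) := by
          simp only [Matrix.mul_assoc]
      _ = Matrix.trace ((B * C) * ((R * D) * (R * (Rᵀ * (Cᵀ * (C * (Cᵀ * (C * (R * Rᵀ))))))))) := by
          rw [hcb, hdr]
      _ = Matrix.trace ((B * C) * ((R * D * R) * (Rᵀ * (Cᵀ * (C * (Cᵀ * (C * (R * Rᵀ)))))))) := by
          simp only [Matrix.mul_assoc]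
      _ = Matrix.trace ((B * C) * (R * (Rᵀ * (Cᵀ * (C * (Cᵀ * (C * (R * Rᵀ)))))))) := by
          rw [hD1]
      _ = Matrix.trace (P * Mᵀ) := by
          simp only [hP, hM, Matrix.transpose_mul, Matrix.transpose_transpose, Matrix.mul_assoc]
  -- claim B : trace (P * Pᵀ) = trace (P * Mᵀ)
  have claimB : Matrix.trace (P * Pᵀ) = Matrix.trace (P * Mᵀ) := by
    calc Matrix.trace (P * Pᵀ)
        = Matrix.trace (((B * C) * (M * Mᵀ)) * (Cᵀ * Bᵀ)) := by
          simp only [hP, hM, Matrix.transpose_mul, Matrix.transpose_transpose, Matrix.mul_assoc]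
      _ = Matrix.trace ((Cᵀ * Bᵀ) * ((B * C) * (M * Mᵀ))) := trace_mul_comm _ _
      _ = Matrix.trace ((B * C) * ((B * C) * (M * Mᵀ))) := by rw [hcb]
      _ = Matrix.trace (((B * C) * (B * C)) * (M * Mᵀ)) := by simp only [Matrix.mul_assoc]
      _ = Matrix.trace ((B * C) * (M * Mᵀ)) := by rw [h5]
      _ = Matrix.trace (P * Mᵀ) := by
          simp only [hP, hM, Matrix.transpose_mul, Matrix.transpose_transpose, Matrix.mul_assoc]
  -- claim C : trace (M * Pᵀ) = trace (P * Mᵀ)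
  have claimC : Matrix.trace (M * Pᵀ) = Matrix.trace (P * Mᵀ) := by
    rw [← Matrix.trace_transpose (M * Pᵀ)]
    congr 1
    simp only [Matrix.transpose_mul, Matrix.transpose_transpose]
  -- conclude via positivity
  have hexp : (P - M) * (P - M)ᵀ = P * Pᵀ - P * Mᵀ - M * Pᵀ + M * Mᵀ := by
    rw [Matrix.transpose_sub]
    noncomm_ring
  have hzero : Matrix.trace ((P - M) * (P - M)ᵀ) = 0 := by
    rw [hexp]
    rw [Matrix.trace_add, Matrix.trace_sub, Matrix.trace_sub]
    rw [claimA, claimB, claimC]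
    ring
  have hPM : P - M = 0 := trace_mul_transpose_self_eq_zero' hzero
  have := sub_eq_zero.mp hPM
  simpa [hP, hM] using this

/-- If the reverse order law holds for `C R`, then `C` and `R` solve the
two-sided projection equation `C⁺ C (R Rᵀ Cᵀ C) R R⁺ = R Rᵀ Cᵀ C`. -/
theorem two_sided_projection_equation (m k n : ℕ)
    (C : Matrix (Fin m) (Fin k) ℝ) (R : Matrix (Fin k) (Fin n) ℝ)
    (B : Matrix (Fin k) (Fin m) ℝ) (D : Matrix (Fin n) (Fin k) ℝ)
    (hB : IsMoorePenrose C B) (hD : IsMoorePenrose R D)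
    (hrev : IsMoorePenrose (C * R) (D * B)) :
    B * C * (R * Rᵀ * Cᵀ * C) * R * D = R * Rᵀ * Cᵀ * C := by
  have l1 := aux_left m k n C R B D hB hD hrev
  have hrev' : IsMoorePenrose (Rᵀ * Cᵀ) (Bᵀ * Dᵀ) := by
    have := isMoorePenrose_transpose hrev
    simpa [Matrix.transpose_mul] using this
  have l2' := aux_left n k m Rᵀ Cᵀ Dᵀ Bᵀ (isMoorePenrose_transpose hD)
    (isMoorePenrose_transpose hB) hrev'
  simp only [Matrix.transpose_transpose] at l2'
  -- l2' : Dᵀ * Rᵀ * (Cᵀ * C * R * Rᵀ) = Cᵀ * C * R * Rᵀ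
  have l2 : R * Rᵀ * Cᵀ * C * R * D = R * Rᵀ * Cᵀ * C := by
    have := congrArg Matrix.transpose l2'
    simpa [Matrix.transpose_mul, Matrix.transpose_transpose, Matrix.mul_assoc] using this
  rw [l1]
  exact l2
end

section
/- Let C be a real m×r matrix with rank r and R a real r×n matrix with rank r, and set A = C R. Then the r×r matrix Cᵀ A Rᵀ is invertible and Rᵀ (Cᵀ A Rᵀ)⁻¹ Cᵀ = Rᵀ (R Rᵀ)⁻¹ (Cᵀ C)⁻¹ Cᵀ; in particular Rᵀ (Cᵀ A Rᵀ)⁻¹ Cᵀ is the Moore–Penrose pseudoinverse of A. -/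
open Matrix

lemma isUnit_of_rank_eq {r : ℕ} (M : Matrix (Fin r) (Fin r) ℝ) (h : M.rank = r) : IsUnit M := by
  rw [Matrix.isUnit_iff_isUnit_det, isUnit_iff_ne_zero]
  intro hd
  obtain ⟨v, hv, hMv⟩ := (Matrix.exists_mulVec_eq_zero_iff).2 hd
  have : Function.Injective M.mulVecLin := by
    have hrange : LinearMap.range M.mulVecLin = ⊤ := by
      apply Submodule.eq_top_of_finrank_eq
      rw [← Matrix.rank, h]; simp
    exact (LinearMap.injective_iff_surjective).2 (LinearMap.range_eq_top.1 hrange)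
  exact hv (this (a₂ := 0) (by simpa using hMv))

/-- For a full-rank factorization `A = C R`, the matrix `Cᵀ A Rᵀ` is invertible,
`Rᵀ (Cᵀ A Rᵀ)⁻¹ Cᵀ = Rᵀ (R Rᵀ)⁻¹ (Cᵀ C)⁻¹ Cᵀ`, and this matrix is the
Moore–Penrose pseudoinverse of `A`. -/
theorem pinv_formula_rational (m r n : ℕ)
    (C : Matrix (Fin m) (Fin r) ℝ) (R : Matrix (Fin r) (Fin n) ℝ)
    (hC : C.rank = r) (hR : R.rank = r)
    (A : Matrix (Fin m) (Fin n) ℝ) (hA : A = C * R) :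
    IsUnit (Cᵀ * A * Rᵀ) ∧
      Rᵀ * (Cᵀ * A * Rᵀ)⁻¹ * Cᵀ = Rᵀ * (R * Rᵀ)⁻¹ * (Cᵀ * C)⁻¹ * Cᵀ ∧
        IsMoorePenrose A (Rᵀ * (Cᵀ * A * Rᵀ)⁻¹ * Cᵀ) := by
  have hCC : IsUnit (Cᵀ * C) :=
    isUnit_of_rank_eq _ (by rw [Matrix.rank_transpose_mul_self, hC])
  have hRR : IsUnit (R * Rᵀ) :=
    isUnit_of_rank_eq _ (by rw [Matrix.rank_self_mul_transpose, hR])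
  have hCCd : IsUnit (Cᵀ * C).det := (Matrix.isUnit_iff_isUnit_det _).1 hCC
  have hRRd : IsUnit (R * Rᵀ).det := (Matrix.isUnit_iff_isUnit_det _).1 hRR
  have hRRi : R * Rᵀ * (R * Rᵀ)⁻¹ = 1 := Matrix.mul_nonsing_inv _ hRRd
  have hRRi' : (R * Rᵀ)⁻¹ * (R * Rᵀ) = 1 := Matrix.nonsing_inv_mul _ hRRd
  have hCCi : Cᵀ * C * (Cᵀ * C)⁻¹ = 1 := Matrix.mul_nonsing_inv _ hCCd
  have hCCi' : (Cᵀ * C)⁻¹ * (Cᵀ * C) = 1 := Matrix.nonsing_inv_mul _ hCCd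
  have k1 : ∀ {p : Type} [Fintype p] (X : Matrix (Fin r) p ℝ),
      R * (Rᵀ * ((R * Rᵀ)⁻¹ * X)) = X := by
    intro p _ X
    rw [← Matrix.mul_assoc, ← Matrix.mul_assoc, hRRi, Matrix.one_mul]
  have k2 : ∀ {p : Type} [Fintype p] (X : Matrix (Fin r) p ℝ),
      (Cᵀ * C)⁻¹ * (Cᵀ * (C * X)) = X := by
    intro p _ X
    rw [← Matrix.mul_assoc, ← Matrix.mul_assoc, Matrix.mul_assoc (Cᵀ * C)⁻¹ Cᵀ C,
      hCCi', Matrix.one_mul]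
  have hfac : Cᵀ * A * Rᵀ = (Cᵀ * C) * (R * Rᵀ) := by
    rw [hA]; simp only [Matrix.mul_assoc]
  have hU : IsUnit (Cᵀ * A * Rᵀ) := by rw [hfac]; exact hCC.mul hRR
  have hinv : (Cᵀ * A * Rᵀ)⁻¹ = (R * Rᵀ)⁻¹ * (Cᵀ * C)⁻¹ := by
    rw [hfac, Matrix.mul_inv_rev]
  have hEq : Rᵀ * (Cᵀ * A * Rᵀ)⁻¹ * Cᵀ = Rᵀ * (R * Rᵀ)⁻¹ * (Cᵀ * C)⁻¹ * Cᵀ := by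
    rw [hinv]; simp only [Matrix.mul_assoc]
  refine ⟨hU, hEq, ?_⟩
  rw [hEq]
  set B := Rᵀ * (R * Rᵀ)⁻¹ * (Cᵀ * C)⁻¹ * Cᵀ with hB
  have hAB : A * B = C * ((Cᵀ * C)⁻¹ * Cᵀ) := by
    rw [hA, hB]; simp only [Matrix.mul_assoc]
    rw [k1]
  have hBA : B * A = Rᵀ * ((R * Rᵀ)⁻¹ * R) := by
    rw [hA, hB]; simp only [Matrix.mul_assoc]
    rw [k2]
  have hRRsymm : ((R * Rᵀ)⁻¹)ᵀ = (R * Rᵀ)⁻¹ := by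
    rw [Matrix.transpose_nonsing_inv]
    congr 1
    rw [Matrix.transpose_mul, Matrix.transpose_transpose]
  have hCCsymm : ((Cᵀ * C)⁻¹)ᵀ = (Cᵀ * C)⁻¹ := by
    rw [Matrix.transpose_nonsing_inv]
    congr 1
    rw [Matrix.transpose_mul, Matrix.transpose_transpose]
  refine ⟨?_, ?_, ?_, ?_⟩
  · rw [hAB, hA]; simp only [Matrix.mul_assoc]
    rw [k2]
  · rw [hBA, hB]; simp only [Matrix.mul_assoc]
    rw [k1]
  · rw [hBA]
    simp only [Matrix.transpose_mul, Matrix.transpose_transpose, hRRsymm, Matrix.mul_assoc]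
  · rw [hAB]
    simp only [Matrix.transpose_mul, Matrix.transpose_transpose, hCCsymm, Matrix.mul_assoc]
end

section
/- Let C be an invertible real m×m matrix and S an invertible real n×n matrix, set A = C · fromBlocks(I_r, 0, 0, 0) · S and G = S⁻¹ · fromBlocks(I_r, Z₁₂, Z₂₁, Z₂₂) · C⁻¹ for real matrices Z₁₂ (r×(m−r)), Z₂₁ ((n−r)×r), Z₂₂ ((n−r)×(m−r)). Then G A G = G if and only if Z₂₂ = Z₂₁ Z₁₂. -/
open Matrix

/-- For invertible `C` and `S`, with `A = C · fromBlocks(I, 0, 0, 0) · S` and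
`G = S⁻¹ · fromBlocks(I, Z₁₂, Z₂₁, Z₂₂) · C⁻¹`, we have `G A G = G` iff
`Z₂₂ = Z₂₁ Z₁₂`. -/
theorem generalized_inverse_GAG_iff (r s t : ℕ)
    (C : Matrix (Fin r ⊕ Fin s) (Fin r ⊕ Fin s) ℝ)
    (S : Matrix (Fin r ⊕ Fin t) (Fin r ⊕ Fin t) ℝ)
    (hC : IsUnit C.det) (hS : IsUnit S.det)
    (Z₁₂ : Matrix (Fin r) (Fin s) ℝ) (Z₂₁ : Matrix (Fin t) (Fin r) ℝ)
    (Z₂₂ : Matrix (Fin t) (Fin s) ℝ)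
    (A : Matrix (Fin r ⊕ Fin s) (Fin r ⊕ Fin t) ℝ)
    (hA : A = C * (fromBlocks 1 0 0 0 : Matrix (Fin r ⊕ Fin s) (Fin r ⊕ Fin t) ℝ) * S)
    (G : Matrix (Fin r ⊕ Fin t) (Fin r ⊕ Fin s) ℝ)
    (hG : G = S⁻¹ * (fromBlocks 1 Z₁₂ Z₂₁ Z₂₂ : Matrix (Fin r ⊕ Fin t) (Fin r ⊕ Fin s) ℝ) * C⁻¹) :
    G * A * G = G ↔ Z₂₂ = Z₂₁ * Z₁₂ := by
  subst hA hG
  set Z : Matrix (Fin r ⊕ Fin t) (Fin r ⊕ Fin s) ℝ := fromBlocks 1 Z₁₂ Z₂₁ Z₂₂ with hZ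
  have hcanc : ∀ X Y : Matrix (Fin r ⊕ Fin t) (Fin r ⊕ Fin s) ℝ,
      S⁻¹ * X * C⁻¹ = S⁻¹ * Y * C⁻¹ ↔ X = Y := by
    intro X Y
    constructor
    · intro h
      have h2 := congrArg (fun M => S * M * C) h
      simp only [Matrix.mul_assoc] at h2
      rw [Matrix.mul_nonsing_inv_cancel_left _ _ hS,
        Matrix.mul_nonsing_inv_cancel_left _ _ hS] at h2
      simpa [Matrix.nonsing_inv_mul _ hC] using h2
    · rintro rfl; rfl
  have hprod : S⁻¹ * Z * C⁻¹ * (C * (fromBlocks 1 0 0 0 : Matrix (Fin r ⊕ Fin s) (Fin r ⊕ Fin t) ℝ) * S) * (S⁻¹ * Z * C⁻¹)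
      = S⁻¹ * (Z * (fromBlocks 1 0 0 0 : Matrix (Fin r ⊕ Fin s) (Fin r ⊕ Fin t) ℝ) * Z) * C⁻¹ := by
    simp only [Matrix.mul_assoc, Matrix.nonsing_inv_mul_cancel_left _ _ hC,
      Matrix.mul_nonsing_inv_cancel_left _ _ hS]
  rw [hprod, hcanc]
  have hZEZ : Z * (fromBlocks 1 0 0 0 : Matrix (Fin r ⊕ Fin s) (Fin r ⊕ Fin t) ℝ) * Z =
      fromBlocks 1 Z₁₂ Z₂₁ (Z₂₁ * Z₁₂) := by
    simp [hZ, fromBlocks_multiply, Matrix.mul_assoc]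
  rw [hZEZ, hZ]
  constructor
  · intro h
    have := congrArg (fun M => toBlocks₂₂ M) h
    simpa using this.symm
  · rintro rfl; rfl
end
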